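/- Let l ≥ 3 and n = 2^l − 1. Then dil(W_n, ST(l)) = l − 1: every bijection from the vertices of the wheel W_n to the vertices of the sibling tree ST(l) has some edge of W_n whose endpoint images are at distance at least l − 1 in ST(l), and there exists a bijection under which every edge of W_n maps to a pair of vertices at distance at most l − 1 in ST(l). -/

import Mathlib

open SimpleGraph

/-- Wheel graph on `Fin n`: hub `0`, rim cycle `1, …, n-1`. -/
def wheelGraph (n : ℕ) : SimpleGraph (Fin n) where
  Adj x y := x ≠ y ∧ (x.val = 0 ∨ y.val = 0 ∨ y.val = x.val + 1 ∨ x.val = y.val + 1 ∨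
    (x.val = 1 ∧ y.val = n - 1) ∨ (y.val = 1 ∧ x.val = n - 1))
  symm := ⟨by rintro x y ⟨h1, h2⟩; exact ⟨h1.symm, by tauto⟩⟩
  loopless := ⟨by rintro x ⟨h1, -⟩; exact h1 rfl⟩

/-- Adjacency of sibling-tree labels: binary tree edges plus edges between the two
children `2x` and `2x+1` (an even label `≥ 2` and its successor). -/
def stAdjLbl (a b : ℕ) : Prop :=
  (b = 2 * a ∨ b = 2 * a + 1 ∨ a = 2 * b ∨ a = 2 * b + 1) ∨
  (b = a + 1 ∧ a % 2 = 0 ∧ 2 ≤ a) ∨ (a = b + 1 ∧ b % 2 = 0 ∧ 2 ≤ b)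

/-- The sibling tree `ST(l)` on `Fin (2^l - 1)`; vertex `x` has label `x+1`. -/
def siblingTree (l : ℕ) : SimpleGraph (Fin (2 ^ l - 1)) where
  Adj x y := stAdjLbl (x.val + 1) (y.val + 1)
  symm := ⟨by rintro x y h; unfold stAdjLbl at *; tauto⟩
  loopless := ⟨by rintro x h; unfold stAdjLbl at h; omega⟩

/-! Lower bound: the function equal to `l - 1` outside the subtree of a child `s ∈ {2, 3}` of the
root and to `l - 1 - depth` inside it changes by at most one along every edge of `ST(l)` (the
subtree is entered only from the root or across the edge `2 — 3`) and vanishes on the leaves of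
that subtree. Whichever subtree avoids the image of the hub therefore has a leaf at distance at
least `l - 1` from it.

Upper bound: map the hub to the root and the rim, in order, to the other vertices in preorder.
Every vertex is within `l - 1` of the root; the successor of a vertex in preorder is its left
child or the right sibling `2p + 1` of one of its ancestors `2p`, hence within `depth ≤ l - 1`;
and the rim closes up between the vertex `2` and the last leaf, a descendant of its sibling `3`. -/

namespace SimpleGraph

variable {V : Type*} {G : SimpleGraph V}

lemma Walk.le_add_length_of_adj {φ : V → ℕ} (hφ : ∀ u v, G.Adj u v → φ u ≤ φ v + 1)
    {x y : V} (p : G.Walk x y) : φ x ≤ φ y + p.length := by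
  induction p with
  | nil => simp
  | cons h _ ih =>
    have := hφ _ _ h
    rw [Walk.length_cons]
    omega

lemma Reachable.le_add_dist_of_adj {φ : V → ℕ} (hφ : ∀ u v, G.Adj u v → φ u ≤ φ v + 1)
    {x y : V} (h : G.Reachable x y) : φ x ≤ φ y + G.dist x y := by
  obtain ⟨p, hp⟩ := h.exists_walk_length_eq_dist
  exact hp ▸ p.le_add_length_of_adj hφ

end SimpleGraph

lemma Nat.div_eq_iff_mul_le_lt {a c k : ℕ} (hk : 0 < k) :
    a / k = c ↔ c * k ≤ a ∧ a < (c + 1) * k := by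
  rw [Nat.div_eq_iff hk, add_one_mul]
  omega

lemma Nat.div_two_pow_log {a : ℕ} (ha : a ≠ 0) : a / 2 ^ Nat.log 2 a = 1 := by
  have h1 := Nat.pow_log_le_self 2 ha
  have h2 := Nat.lt_pow_succ_log_self one_lt_two a
  rw [Nat.div_eq_iff_mul_le_lt (Nat.two_pow_pos _)]
  rw [pow_succ] at h2
  omega

section SiblingTree

variable {l : ℕ}

lemma siblingTree_adj_iff {x y : Fin (2 ^ l - 1)} :
    (siblingTree l).Adj x y ↔ x ≠ y ∧ (y.val + 1 = (x.val + 1) / 2 ∨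
      x.val + 1 = (y.val + 1) / 2 ∨ 2 ≤ x.val + 1 ∧ (x.val + 1) / 2 = (y.val + 1) / 2) := by
  change stAdjLbl _ _ ↔ _
  rw [Ne, Fin.ext_iff]
  unfold stAdjLbl
  omega

lemma siblingTree_exists_walk_of_div_pow (x y : Fin (2 ^ l - 1)) (j : ℕ)
    (h : (x.val + 1) / 2 ^ j = y.val + 1) : ∃ p : (siblingTree l).Walk x y, p.length = j := by
  induction j generalizing y with
  | zero =>
    obtain rfl : x = y := Fin.ext (by simpa using h)
    exact ⟨.nil, rfl⟩
  | succ j ih =>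
    rw [pow_succ, ← Nat.div_div_eq_div_mul] at h
    have hle : (x.val + 1) / 2 ^ j ≤ x.val + 1 := Nat.div_le_self _ _
    let z : Fin (2 ^ l - 1) := ⟨(x.val + 1) / 2 ^ j - 1, by omega⟩
    have hz : z.val + 1 = (x.val + 1) / 2 ^ j := by simp only [z]; omega
    obtain ⟨p, hp⟩ := ih z hz.symm
    have hadj : (siblingTree l).Adj z y :=
      siblingTree_adj_iff.mpr ⟨fun he => by rw [he] at hz; omega, by omega⟩
    exact ⟨p.concat hadj, by simp [hp]⟩

lemma siblingTree_dist_le_of_div_pow {x y : Fin (2 ^ l - 1)} {j : ℕ}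
    (h : (x.val + 1) / 2 ^ j = y.val + 1) : (siblingTree l).dist x y ≤ j := by
  obtain ⟨p, hp⟩ := siblingTree_exists_walk_of_div_pow x y j h
  exact hp ▸ SimpleGraph.dist_le p

lemma siblingTree_dist_root_le (x : Fin (2 ^ l - 1)) :
    (siblingTree l).dist x ⟨0, x.pos⟩ ≤ l - 1 := by
  have hlog : Nat.log 2 (x.val + 1) < l :=
    Nat.log_lt_of_lt_pow (by omega) (by have := x.isLt; omega)
  have := siblingTree_dist_le_of_div_pow (x := x) (y := ⟨0, x.pos⟩)
    (Nat.div_two_pow_log (by omega))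
  omega

lemma siblingTree_reachable (x y : Fin (2 ^ l - 1)) : (siblingTree l).Reachable x y := by
  have to_root (z : Fin (2 ^ l - 1)) : (siblingTree l).Reachable z ⟨0, z.pos⟩ :=
    (siblingTree_exists_walk_of_div_pow z _ _ (Nat.div_two_pow_log (by omega))).elim
      fun p _ => ⟨p⟩
  exact (to_root x).trans (to_root y).symm

lemma siblingTree_dist_le_of_div_pow_div_two {x y : Fin (2 ^ l - 1)} {j : ℕ}
    (hy : 2 ≤ y.val + 1) (h : (x.val + 1) / 2 ^ j / 2 = (y.val + 1) / 2) :
    (siblingTree l).dist x y ≤ j + 1 := by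
  have hle : (x.val + 1) / 2 ^ j ≤ x.val + 1 := Nat.div_le_self _ _
  obtain ⟨z, hz⟩ : ∃ z : Fin (2 ^ l - 1), z.val + 1 = (x.val + 1) / 2 ^ j :=
    ⟨⟨(x.val + 1) / 2 ^ j - 1, by omega⟩, by simp only; omega⟩
  have hzy : (siblingTree l).dist z y ≤ 1 := by
    rcases eq_or_ne z y with rfl | hne
    · simp
    · exact (SimpleGraph.dist_eq_one_iff_adj.mpr (siblingTree_adj_iff.mpr ⟨hne, by omega⟩)).le
  calc (siblingTree l).dist x y ≤ (siblingTree l).dist x z + (siblingTree l).dist z y :=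
        (siblingTree_reachable x z).dist_triangle_left y
    _ ≤ j + 1 := add_le_add (siblingTree_dist_le_of_div_pow hz.symm) hzy

end SiblingTree

/-- For a label `a ≥ 2`, the child (`2` or `3`) of the root whose subtree contains `a`. -/
def rootChild (a : ℕ) : ℕ := a / 2 ^ (Nat.log 2 a - 1)

lemma rootChild_div_two {a : ℕ} (ha : 2 ≤ Nat.log 2 a) : rootChild (a / 2) = rootChild a := by
  unfold rootChild
  rw [Nat.log_div_base, Nat.div_div_eq_div_mul, ← pow_succ']
  congr 2
  omega

def branchPotential (l s a : ℕ) : ℕ :=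
  if rootChild a = s then l - 1 - Nat.log 2 a else l - 1

lemma branchPotential_div_two {l s a : ℕ} (hs : 2 ≤ s) (ha : 2 ≤ a) :
    branchPotential l s a ≤ branchPotential l s (a / 2) + 1 ∧
      branchPotential l s (a / 2) ≤ branchPotential l s a + 1 := by
  have hlog : 1 ≤ Nat.log 2 a := Nat.le_log_of_pow_le one_lt_two (by simpa using ha)
  have hhalf := Nat.log_div_base 2 a
  unfold branchPotential
  rcases hlog.eq_or_lt with hlog | hlog
  · have ha2 : a / 2 = 1 := by
      have := (Nat.log_eq_iff (by simp)).mp hlog.symm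
      omega
    rw [ha2, if_neg (show rootChild 1 ≠ s by simp [rootChild]; omega)]
    split_ifs <;> omega
  · rw [rootChild_div_two hlog]
    split_ifs <;> omega

lemma branchPotential_sibling {l s a b : ℕ} (ha : 2 ≤ a) (hab : a / 2 = b / 2) :
    branchPotential l s a ≤ branchPotential l s b + 1 := by
  have hloga : 1 ≤ Nat.log 2 a := Nat.le_log_of_pow_le one_lt_two (by simpa using ha)
  have hlogb : Nat.log 2 a = Nat.log 2 b := by
    have := Nat.log_div_base 2 a
    have := Nat.log_div_base 2 b
    have : 1 ≤ Nat.log 2 b := Nat.le_log_of_pow_le one_lt_two (by simp; omega)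
    rw [hab] at *
    omega
  unfold branchPotential
  rcases hloga.eq_or_lt with hlog | hlog
  · split_ifs <;> omega
  · have hrc : rootChild a = rootChild b := by
      rw [← rootChild_div_two hlog, ← rootChild_div_two (by omega : 2 ≤ Nat.log 2 b), hab]
    rw [hrc, hlogb]
    omega

lemma siblingTree_branchPotential_le {l s : ℕ} (hs : 2 ≤ s) {x y : Fin (2 ^ l - 1)}
    (h : (siblingTree l).Adj x y) :
    branchPotential l s (x.val + 1) ≤ branchPotential l s (y.val + 1) + 1 := by
  obtain ⟨-, hy | hx | ⟨h2, hxy⟩⟩ := siblingTree_adj_iff.mp h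
  · exact hy ▸ (branchPotential_div_two hs (by omega)).1
  · exact hx ▸ (branchPotential_div_two hs (by omega)).2
  · exact branchPotential_sibling h2 hxy

lemma siblingTree_exists_le_dist {l : ℕ} (hl : 2 ≤ l) (x : Fin (2 ^ l - 1)) :
    ∃ y, l - 1 ≤ (siblingTree l).dist x y := by
  obtain ⟨s, hs2, hs3, hxs⟩ : ∃ s, 2 ≤ s ∧ s ≤ 3 ∧ rootChild (x.val + 1) ≠ s := by
    by_cases h : rootChild (x.val + 1) = 2
    exacts [⟨3, by omega, le_rfl, by omega⟩, ⟨2, le_rfl, by omega, h⟩]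
  have hpow : 2 ^ l = 4 * 2 ^ (l - 2) := by
    rw [show (4 : ℕ) = 2 ^ 2 by rfl, ← pow_add]; congr 1; omega
  have hpos := Nat.two_pow_pos (l - 2)
  have hlo : 2 * 2 ^ (l - 2) ≤ s * 2 ^ (l - 2) := Nat.mul_le_mul_right _ hs2
  have hhi : s * 2 ^ (l - 2) ≤ 3 * 2 ^ (l - 2) := Nat.mul_le_mul_right _ hs3
  -- the leftmost leaf of the subtree of `s`
  let y : Fin (2 ^ l - 1) := ⟨s * 2 ^ (l - 2) - 1, by omega⟩
  have hy : y.val + 1 = s * 2 ^ (l - 2) := by simp only [y]; omega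
  have hlogy : Nat.log 2 (y.val + 1) = l - 1 := by
    rw [Nat.log_eq_iff (by omega), hy, show l - 1 + 1 = l by omega,
      show l - 1 = l - 2 + 1 by omega, pow_succ]
    omega
  have hy0 : branchPotential l s (y.val + 1) = 0 := by
    rw [branchPotential, if_pos, hlogy, Nat.sub_self]
    rw [rootChild, hlogy, show l - 1 - 1 = l - 2 by omega, hy, Nat.mul_div_cancel _ hpos]
  refine ⟨y, ?_⟩
  have := (siblingTree_reachable x y).le_add_dist_of_adj
    (φ := fun v => branchPotential l s (v.val + 1)) (fun _ _ => siblingTree_branchPotential_le hs2)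
  have hx0 : branchPotential l s (x.val + 1) = l - 1 := if_neg hxs
  simpa only [hx0, hy0, zero_add] using this

/-- `preorderLabel d c r` is the label of the `r`-th vertex (counting from `0`) in the preorder
traversal of the complete binary subtree with `d` levels rooted at the label `c`. -/
def preorderLabel : ℕ → ℕ → ℕ → ℕ
  | 0, c, _ => c
  | d + 1, c, r =>
    if r = 0 then c
    else if r < 2 ^ d then preorderLabel d (2 * c) (r - 1)
    else preorderLabel d (2 * c + 1) (r - 2 ^ d)

@[simp]
lemma preorderLabel_zero (d c : ℕ) : preorderLabel d c 0 = c := by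
  cases d <;> simp [preorderLabel]

lemma preorderLabel_succ_of_lt {d c r : ℕ} (h0 : r ≠ 0) (h : r < 2 ^ d) :
    preorderLabel (d + 1) c r = preorderLabel d (2 * c) (r - 1) := by
  simp [preorderLabel, h0, h]

lemma preorderLabel_succ_of_le {d c r : ℕ} (h : 2 ^ d ≤ r) :
    preorderLabel (d + 1) c r = preorderLabel d (2 * c + 1) (r - 2 ^ d) := by
  have := Nat.two_pow_pos d
  simp [preorderLabel, show r ≠ 0 by omega, show ¬r < 2 ^ d by omega]

lemma preorderLabel_div_pow {d c r : ℕ} (h : r + 1 < 2 ^ d) :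
    ∃ j < d, preorderLabel d c r / 2 ^ j = c := by
  induction d generalizing c r with
  | zero => simp at h
  | succ d ih =>
    rw [pow_succ] at h
    have descend {c' : ℕ} (hc' : c' / 2 = c) {r' : ℕ} (h' : r' + 1 < 2 ^ d) :
        ∃ j < d + 1, preorderLabel d c' r' / 2 ^ j = c := by
      obtain ⟨j, hj, hdiv⟩ := ih (c := c') h'
      exact ⟨j + 1, by omega, by rw [pow_succ, ← Nat.div_div_eq_div_mul, hdiv, hc']⟩
    rcases Nat.eq_zero_or_pos r with rfl | hr
    · exact ⟨0, by omega, by simp⟩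
    by_cases hlt : r < 2 ^ d
    · rw [preorderLabel_succ_of_lt hr.ne' hlt]
      exact descend (by omega) (by omega)
    · rw [preorderLabel_succ_of_le (by omega)]
      exact descend (by omega) (by omega)

lemma preorderLabel_surjective {d c j a : ℕ} (hj : j < d) (ha : a / 2 ^ j = c) :
    ∃ r, r + 1 < 2 ^ d ∧ preorderLabel d c r = a := by
  induction d generalizing c j with
  | zero => omega
  | succ d ih =>
    have hpow : 2 ^ (d + 1) = 2 * 2 ^ d := by rw [pow_succ']
    have hpos := Nat.two_pow_pos d
    cases j with
    | zero => exact ⟨0, by omega, by simpa using ha.symm⟩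
    | succ j =>
      rw [pow_succ, ← Nat.div_div_eq_div_mul] at ha
      obtain ⟨r, hr, hra⟩ := ih (c := a / 2 ^ j) (by omega) rfl
      rcases Nat.even_or_odd' (a / 2 ^ j) with ⟨c', hc' | hc'⟩ <;> rw [hc'] at hra ha
      · refine ⟨r + 1, by omega, ?_⟩
        rw [preorderLabel_succ_of_lt (by omega) (by omega), Nat.add_sub_cancel]
        convert hra using 2
        omega
      · refine ⟨r + 2 ^ d, by omega, ?_⟩
        rw [preorderLabel_succ_of_le (by omega), Nat.add_sub_cancel]
        convert hra using 2
        omega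

lemma preorderLabel_succ {d c r : ℕ} (h : r + 2 < 2 ^ d) :
    preorderLabel d c (r + 1) = 2 * preorderLabel d c r ∨
      ∃ j p, c ≤ p ∧ preorderLabel d c r / 2 ^ j = 2 * p ∧
        preorderLabel d c (r + 1) = 2 * p + 1 := by
  induction d generalizing c r with
  | zero => simp at h
  | succ d ih =>
    have hpow : 2 ^ (d + 1) = 2 * 2 ^ d := by rw [pow_succ']
    have hpos := Nat.two_pow_pos d
    have weaken {c' : ℕ} (hc : c ≤ c') {a b : ℕ} :
        (b = 2 * a ∨ ∃ j p, c' ≤ p ∧ a / 2 ^ j = 2 * p ∧ b = 2 * p + 1) →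
        (b = 2 * a ∨ ∃ j p, c ≤ p ∧ a / 2 ^ j = 2 * p ∧ b = 2 * p + 1) := by
      rintro (h | ⟨j, p, hp, h⟩)
      exacts [.inl h, .inr ⟨j, p, by omega, h⟩]
    rcases Nat.eq_zero_or_pos r with rfl | hr
    · left
      rw [zero_add, preorderLabel_succ_of_lt one_ne_zero (by omega)]
      simp
    rcases lt_trichotomy (r + 1) (2 ^ d) with hlt | heq | hgt
    · obtain ⟨r, rfl⟩ : ∃ r', r = r' + 1 := ⟨r - 1, by omega⟩
      rw [preorderLabel_succ_of_lt hr.ne' (by omega), preorderLabel_succ_of_lt (by omega) hlt,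
        Nat.add_sub_cancel, Nat.add_sub_cancel]
      exact weaken (c' := 2 * c) (by omega) (ih (by omega))
    · right
      obtain ⟨j, -, hj⟩ := preorderLabel_div_pow (c := 2 * c) (r := r - 1) (d := d) (by omega)
      refine ⟨j, c, le_rfl, ?_, ?_⟩
      · rwa [preorderLabel_succ_of_lt hr.ne' (by omega)]
      · rw [preorderLabel_succ_of_le heq.ge, heq, Nat.sub_self, preorderLabel_zero]
    · rw [preorderLabel_succ_of_le (by omega), preorderLabel_succ_of_le (by omega),
        show r + 1 - 2 ^ d = r - 2 ^ d + 1 by omega]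
      exact weaken (c' := 2 * c + 1) (by omega) (ih (by omega))

lemma preorderLabel_root_bounds {d r : ℕ} (h : r + 1 < 2 ^ d) :
    1 ≤ preorderLabel d 1 r ∧ preorderLabel d 1 r < 2 ^ d := by
  obtain ⟨j, hj, hdiv⟩ := preorderLabel_div_pow (c := 1) h
  have hpow : 2 ^ (j + 1) ≤ 2 ^ d := Nat.pow_le_pow_right two_pos hj
  have := (Nat.div_eq_iff_mul_le_lt (Nat.two_pow_pos j)).mp hdiv
  rw [pow_succ] at hpow
  omega

section PreorderVertex

variable {l : ℕ}

def preorderVertex (l : ℕ) (r : Fin (2 ^ l - 1)) : Fin (2 ^ l - 1) :=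
  ⟨preorderLabel l 1 r - 1, by
    have hr := r.isLt
    have := (preorderLabel_root_bounds (d := l) (r := r) (by omega)).2
    omega⟩

lemma preorderVertex_val_add_one (r : Fin (2 ^ l - 1)) :
    (preorderVertex l r).val + 1 = preorderLabel l 1 r := by
  have := (preorderLabel_root_bounds (d := l) (r := r) (by omega)).1
  simp only [preorderVertex]
  omega

lemma preorderVertex_surjective (l : ℕ) : Function.Surjective (preorderVertex l) := by
  intro y
  have hlog : Nat.log 2 (y.val + 1) < l :=
    Nat.log_lt_of_lt_pow (by omega) (by have := y.isLt; omega)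
  obtain ⟨r, hr, hry⟩ := preorderLabel_surjective hlog (Nat.div_two_pow_log (by omega))
  refine ⟨⟨r, by omega⟩, Fin.ext ?_⟩
  simp only [preorderVertex, hry]
  omega

lemma dist_preorderVertex_root_le (r : Fin (2 ^ l - 1)) {s : Fin (2 ^ l - 1)} (hs : s.val = 0) :
    (siblingTree l).dist (preorderVertex l r) (preorderVertex l s) ≤ l - 1 := by
  have hroot : preorderVertex l s = ⟨0, s.pos⟩ := by
    ext
    simp [preorderVertex, hs]
  exact hroot ▸ siblingTree_dist_root_le _

lemma dist_preorderVertex_succ_le (hl : 2 ≤ l) {r s : Fin (2 ^ l - 1)} (hs : s.val = r.val + 1) :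
    (siblingTree l).dist (preorderVertex l r) (preorderVertex l s) ≤ l - 1 := by
  have hcur := preorderVertex_val_add_one r
  have hnext := preorderVertex_val_add_one s
  rw [hs] at hnext
  rcases preorderLabel_succ (d := l) (c := 1) (r := r.val) (by omega) with
    hchild | ⟨j, p, hp, hj, hsib⟩
  · have hadj : (siblingTree l).Adj (preorderVertex l r) (preorderVertex l s) :=
      siblingTree_adj_iff.mpr ⟨fun h => by rw [h] at hcur; omega, by omega⟩
    rw [SimpleGraph.dist_eq_one_iff_adj.mpr hadj]
    omega
  · have hpow : 2 ^ (j + 1) < 2 ^ l := by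
      have := (Nat.div_eq_iff_mul_le_lt (Nat.two_pow_pos j)).mp hj
      have := Nat.mul_le_mul_right (2 ^ j) (show 2 ≤ 2 * p by omega)
      have := (preorderVertex l r).isLt
      rw [pow_succ]
      omega
    have := (Nat.pow_lt_pow_iff_right one_lt_two).mp hpow
    have := siblingTree_dist_le_of_div_pow_div_two (x := preorderVertex l r)
      (y := preorderVertex l s) (j := j) (by omega) (by rw [hcur, hj, hnext, hsib]; omega)
    omega

lemma dist_preorderVertex_wrap_le (hl : 2 ≤ l) {r s : Fin (2 ^ l - 1)} (hr : r.val = 1)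
    (hs : s.val = 2 ^ l - 2) :
    (siblingTree l).dist (preorderVertex l r) (preorderVertex l s) ≤ l - 1 := by
  obtain ⟨d, rfl⟩ : ∃ d, l = d + 1 := ⟨l - 1, by omega⟩
  have hpow : 2 ^ (d + 1) = 2 * 2 ^ d := by rw [pow_succ']
  have hd : 2 ≤ 2 ^ d := Nat.le_self_pow (by omega) 2
  have hfirst : (preorderVertex (d + 1) r).val + 1 = 2 := by
    rw [preorderVertex_val_add_one, hr, preorderLabel_succ_of_lt one_ne_zero (by omega)]
    simp
  obtain ⟨j, hj, hlast⟩ : ∃ j < d, ((preorderVertex (d + 1) s).val + 1) / 2 ^ j = 3 := by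
    rw [preorderVertex_val_add_one, hs, preorderLabel_succ_of_le (by omega)]
    exact preorderLabel_div_pow (d := d) (by omega)
  rw [SimpleGraph.dist_comm]
  have := siblingTree_dist_le_of_div_pow_div_two (x := preorderVertex (d + 1) s)
    (y := preorderVertex (d + 1) r) (j := j) (by omega) (by rw [hlast, hfirst])
  omega

end PreorderVertex

theorem dil_wheel_siblingTree (l n : ℕ) (hl : 3 ≤ l) (hn : n = 2 ^ l - 1) :
    (∀ f : Fin n ≃ Fin (2 ^ l - 1), ∃ u v : Fin n, (wheelGraph n).Adj u v ∧
      l - 1 ≤ (siblingTree l).dist (f u) (f v)) ∧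
    (∃ f : Fin n ≃ Fin (2 ^ l - 1), ∀ u v : Fin n, (wheelGraph n).Adj u v →
      (siblingTree l).dist (f u) (f v) ≤ l - 1) := by
  subst hn
  have hpow : 1 < 2 ^ l := Nat.one_lt_two_pow (by omega)
  refine ⟨fun f => ?_, .ofBijective _ (preorderVertex_surjective l).bijective_of_finite, ?_⟩
  · let hub : Fin (2 ^ l - 1) := ⟨0, by omega⟩
    obtain ⟨y, hy⟩ := siblingTree_exists_le_dist (by omega) (f hub)
    refine ⟨hub, f.symm y, ⟨fun h => ?_, .inl rfl⟩, by rwa [Equiv.apply_symm_apply]⟩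
    rw [h, Equiv.apply_symm_apply, SimpleGraph.dist_self] at hy
    omega
  · rintro u v ⟨-, huv⟩
    simp only [Equiv.ofBijective_apply]
    rcases huv with h | h | h | h | ⟨h, h'⟩ | ⟨h, h'⟩
    · exact SimpleGraph.dist_comm.trans_le (dist_preorderVertex_root_le v h)
    · exact dist_preorderVertex_root_le u h
    · exact dist_preorderVertex_succ_le (by omega) h
    · exact SimpleGraph.dist_comm.trans_le (dist_preorderVertex_succ_le (by omega) h)
    · exact dist_preorderVertex_wrap_le (by omega) h (by omega)
    · exact SimpleGraph.dist_comm.trans_le (dist_preorderVertex_wrap_le (by omega) h (by omega))
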